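/- arXiv:math/0402252 — 3 statements merged into one kernel-verified Lean document; each statement's English description precedes it below -/
import Mathlib

section
/- Let n > 2 be an integer and R > 0. Let f : ℝⁿ → ℝ be a smooth, compactly supported, rotationally symmetric function (f(x) depends only on |x|) with f(x) = 1 for all |x| ≤ R. Then ∫_{ℝⁿ} |∇f|² dx ≥ (n − 2)·c·R^{n−2}, where c is the (n−1)-dimensional surface measure of the unit sphere in ℝⁿ. -/
open MeasureTheory Set Metric

lemma fderiv_norm_radial {n : ℕ} (f : EuclideanSpace ℝ (Fin n) → ℝ)
    (hsmooth : ContDiff ℝ (⊤ : ℕ∞) f)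
    (hrot : ∀ x y : EuclideanSpace ℝ (Fin n), ‖x‖ = ‖y‖ → f x = f y)
    (x y : EuclideanSpace ℝ (Fin n)) (hxy : ‖x‖ = ‖y‖) :
    ‖fderiv ℝ f x‖ = ‖fderiv ℝ f y‖ := by
  set e : EuclideanSpace ℝ (Fin n) ≃ₗᵢ[ℝ] EuclideanSpace ℝ (Fin n) :=
    Submodule.reflection (ℝ ∙ (y - x))ᗮ with he
  have hey : e y = x := Submodule.reflection_sub hxy.symm
  have hfe : f = f ∘ e := by
    funext z
    exact hrot z (e z) (e.norm_map z).symm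
  have h1 : fderiv ℝ f y = (fderiv ℝ f x).comp e.toLinearIsometry.toContinuousLinearMap := by
    conv_lhs => rw [hfe]
    have hde : HasFDerivAt e e.toLinearIsometry.toContinuousLinearMap y :=
      e.toContinuousLinearEquiv.hasFDerivAt
    have := ((hsmooth.differentiable (by simp) (e y)).hasFDerivAt.comp y hde).fderiv
    rw [this, hey]
  rw [h1]
  have h2 := ContinuousLinearMap.opNorm_comp_linearIsometryEquiv (fderiv ℝ f x) e
  rw [← h2]
  rfl

/-- Capacity-type lower bound in `ℝⁿ`, `n > 2`: if `f` is a smooth, compactly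
supported, rotationally symmetric function with `f ≡ 1` on the ball of radius
`R`, then `∫ |∇f|² ≥ (n - 2) · c · R^(n-2)`, where `c = n · vol(B(0,1))` is the
surface measure of the unit sphere `S^{n-1}` in `ℝⁿ`. -/
theorem stmt_3 (n : ℕ) (hn : 2 < n) (R : ℝ) (hR : 0 < R)
    (f : EuclideanSpace ℝ (Fin n) → ℝ)
    (hsmooth : ContDiff ℝ (⊤ : ℕ∞) f) (hsupp : HasCompactSupport f)
    (hrot : ∀ x y : EuclideanSpace ℝ (Fin n), ‖x‖ = ‖y‖ → f x = f y)
    (hone : ∀ x : EuclideanSpace ℝ (Fin n), ‖x‖ ≤ R → f x = 1) :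
    ((n : ℝ) - 2) *
        ((n : ℝ) * (volume (Metric.ball (0 : EuclideanSpace ℝ (Fin n)) 1)).toReal) *
        R ^ (n - 2) ≤
      ∫ x, ‖gradient f x‖ ^ 2 := by
  have hn' : 0 < n := by omega
  have h2n : (2 : ℝ) < (n : ℝ) := by exact_mod_cast hn
  set v : EuclideanSpace ℝ (Fin n) := EuclideanSpace.single ⟨0, hn'⟩ 1 with hv
  have hvnorm : ‖v‖ = 1 := by simp [hv]
  have hnorm_smul : ∀ r : ℝ, ‖r • v‖ = |r| := fun r => by
    rw [norm_smul, hvnorm, mul_one, Real.norm_eq_abs]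
  haveI : Nontrivial (EuclideanSpace ℝ (Fin n)) :=
    nontrivial_of_ne v 0 (by intro h0; rw [h0, norm_zero] at hvnorm; norm_num at hvnorm)
  have hdiff := hsmooth.differentiable (by simp)
  set h : ℝ → ℝ := fun r => ‖fderiv ℝ f (r • v)‖ with hhdef
  have key : ∀ x : EuclideanSpace ℝ (Fin n), ‖gradient f x‖ = h ‖x‖ := by
    intro x
    have h1 : ‖gradient f x‖ = ‖fderiv ℝ f x‖ := by
      rw [gradient]
      exact LinearIsometryEquiv.norm_map _ _
    rw [h1]
    exact fderiv_norm_radial f hsmooth hrot x (‖x‖ • v)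
      (by rw [hnorm_smul, abs_of_nonneg (norm_nonneg x)])
  have hhcont : Continuous h :=
    ((hsmooth.continuous_fderiv (by simp)).comp (continuous_id.smul continuous_const)).norm
  -- the radial profile and its derivative
  set g : ℝ → ℝ := fun r => f (r • v) with hgdef
  set g' : ℝ → ℝ := fun r => fderiv ℝ f (r • v) v with hg'def
  have hgd : ∀ r : ℝ, HasDerivAt g (g' r) r := by
    intro r
    have h1 : HasDerivAt (fun t : ℝ => t • v) v r := by
      simpa using (hasDerivAt_id r).smul_const v
    exact (hdiff (r • v)).hasFDerivAt.comp_hasDerivAt r h1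
  have hg'cont : Continuous g' :=
    ((hsmooth.continuous_fderiv (by simp)).comp (continuous_id.smul continuous_const)).clm_apply
      continuous_const
  have hg'le : ∀ r : ℝ, |g' r| ≤ h r := by
    intro r
    calc |g' r| = ‖fderiv ℝ f (r • v) v‖ := (Real.norm_eq_abs _).symm
      _ ≤ ‖fderiv ℝ f (r • v)‖ * ‖v‖ := (fderiv ℝ f (r • v)).le_opNorm v
      _ = h r := by rw [hvnorm, mul_one]
  -- support bound
  obtain ⟨K, hK⟩ := hsupp.isBounded.subset_closedBall 0
  have hfzero : ∀ z : EuclideanSpace ℝ (Fin n), K < ‖z‖ → f z = 0 := by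
    intro z hz
    apply image_eq_zero_of_notMem_tsupport
    intro hm
    have := hK hm
    rw [mem_closedBall, dist_zero_right] at this
    linarith
  have hhzero : ∀ r : ℝ, K < |r| → h r = 0 := by
    intro r hr
    have : r • v ∉ tsupport f := by
      intro hm
      have := hK hm
      rw [mem_closedBall, dist_zero_right, hnorm_smul] at this
      linarith
    have hsub := support_fderiv_subset ℝ (f := f)
    have : fderiv ℝ f (r • v) = 0 := by
      by_contra hne
      exact this (hsub hne)
    simp only [hhdef, this, norm_zero]
  -- outer radius
  set M : ℝ := max (R + 1) (|K| + 1) with hM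
  have hRM : R < M := lt_of_lt_of_le (by linarith) (le_max_left _ _)
  have hM0 : 0 < M := hR.trans hRM
  have hMK : K < M :=
    lt_of_le_of_lt (le_abs_self K) (lt_of_lt_of_le (by linarith) (le_max_right _ _))
  have hgM : g M = 0 := hfzero _ (by rw [hnorm_smul, abs_of_pos hM0]; exact hMK)
  have hgR : g R = 1 := hone _ (by rw [hnorm_smul, abs_of_pos hR])
  have hFTC : ∫ r in R..M, g' r = g M - g R :=
    intervalIntegral.integral_eq_sub_of_hasDerivAt (fun x _ => hgd x)
      (hg'cont.intervalIntegrable R M)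
  set a : ℝ := ((n : ℝ) - 2) * R ^ ((n : ℤ) - 2) with ha
  have hRz : (0:ℝ) < R ^ ((n : ℤ) - 2) := zpow_pos hR _
  have ha0 : 0 < a := mul_pos (by linarith) hRz
  set ψ : ℝ → ℝ := fun r => (r ^ (n - 1))⁻¹ with hψ
  have hψz : ψ = fun r : ℝ => r ^ (1 - (n : ℤ)) := by
    funext r
    show (r ^ (n - 1))⁻¹ = r ^ (1 - (n : ℤ))
    rw [← zpow_natCast r (n - 1), ← zpow_neg]
    congr 1
    push_cast [Nat.cast_sub (by omega : 1 ≤ n)]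
    ring
  have hψcontOn : ContinuousOn ψ (Set.uIcc R M) := by
    apply ContinuousOn.inv₀ ((continuous_pow _).continuousOn)
    intro x hx
    rw [uIcc_of_le hRM.le] at hx
    exact pow_ne_zero _ (ne_of_gt (lt_of_lt_of_le hR hx.1))
  have hψint : IntervalIntegrable ψ volume R M := hψcontOn.intervalIntegrable
  have hpt : ∀ r ∈ Icc R M, -(2 * a) * g' r - a ^ 2 * ψ r ≤ r ^ (n - 1) * g' r ^ 2 := by
    intro r hr
    have hrpos : 0 < r := lt_of_lt_of_le hR hr.1
    have hppos : 0 < r ^ (n - 1) := pow_pos hrpos _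
    have hkey : r ^ (n - 1) * g' r ^ 2 + 2 * a * g' r + a ^ 2 * (r ^ (n - 1))⁻¹
        = (r ^ (n - 1) * g' r + a) ^ 2 / r ^ (n - 1) := by
      field_simp
      ring
    have h2 : 0 ≤ (r ^ (n - 1) * g' r + a) ^ 2 / r ^ (n - 1) :=
      div_nonneg (sq_nonneg _) hppos.le
    simp only [hψ]
    nlinarith [hkey, h2]
  have hF1cont : Continuous fun r : ℝ => r ^ (n - 1) * g' r ^ 2 :=
    (continuous_pow _).mul (hg'cont.pow 2)
  have hmono1 : ∫ r in R..M, (-(2 * a) * g' r - a ^ 2 * ψ r)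
      ≤ ∫ r in R..M, r ^ (n - 1) * g' r ^ 2 :=
    intervalIntegral.integral_mono_on hRM.le
      (((hg'cont.intervalIntegrable R M).const_mul _).sub (hψint.const_mul _))
      (hF1cont.intervalIntegrable R M) hpt
  have hψval : ∫ r in R..M, ψ r
      = (M ^ ((1 - (n:ℤ)) + 1) - R ^ ((1 - (n:ℤ)) + 1)) / ((((1 - (n:ℤ)) : ℤ) : ℝ) + 1) := by
    rw [hψz]
    simp only []
    refine integral_zpow (Or.inr ⟨?_, notMem_uIcc_of_lt hR hM0⟩)
    intro hcon
    omega
  have hψle : ∫ r in R..M, ψ r ≤ R ^ ((2:ℤ) - n) / ((n : ℝ) - 2) := by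
    rw [hψval]
    have e1 : (1 - (n:ℤ)) + 1 = 2 - n := by ring
    rw [e1]
    have hMz : (0:ℝ) < M ^ ((2:ℤ) - n) := zpow_pos hM0 _
    have hden : (((1 - (n:ℤ)) : ℤ) : ℝ) + 1 = 2 - (n:ℝ) := by push_cast; ring
    rw [hden]
    have e2 : (M ^ ((2:ℤ) - n) - R ^ ((2:ℤ) - n)) / (2 - (n:ℝ))
        = (R ^ ((2:ℤ) - n) - M ^ ((2:ℤ) - n)) / ((n:ℝ) - 2) := by
      rw [div_eq_div_iff (by linarith) (by linarith)]
      ring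
    rw [e2]
    apply div_le_div_of_nonneg_right ?_ (by linarith)
    linarith
  have hlhs : ∫ r in R..M, (-(2 * a) * g' r - a ^ 2 * ψ r)
      = 2 * a - a ^ 2 * ∫ r in R..M, ψ r := by
    rw [intervalIntegral.integral_sub ((hg'cont.intervalIntegrable R M).const_mul _)
        (hψint.const_mul _), intervalIntegral.integral_const_mul,
        intervalIntegral.integral_const_mul, hFTC, hgM, hgR]
    ring
  have hne : (n:ℝ) - 2 ≠ 0 := by linarith
  have hzz : R ^ ((n:ℤ) - 2) * R ^ ((n:ℤ) - 2) * R ^ ((2:ℤ) - n) = R ^ ((n:ℤ) - 2) := by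
    rw [← zpow_add₀ hR.ne', ← zpow_add₀ hR.ne']
    congr 1
    ring
  have h2 : a ^ 2 * (R ^ ((2:ℤ) - n) / ((n : ℝ) - 2)) = a := by
    calc a ^ 2 * (R ^ ((2:ℤ) - n) / ((n : ℝ) - 2))
        = ((n:ℝ) - 2) * (R ^ ((n:ℤ) - 2) * R ^ ((n:ℤ) - 2) * R ^ ((2:ℤ) - n))
          * (((n:ℝ) - 2) / ((n:ℝ) - 2)) := by rw [ha]; ring
      _ = a := by rw [div_self hne, hzz, mul_one, ← ha]
  have hstep1 : a ≤ ∫ r in R..M, r ^ (n - 1) * g' r ^ 2 := by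
    have hmul := mul_le_mul_of_nonneg_left hψle (sq_nonneg a)
    rw [hlhs] at hmono1
    linarith
  have hmono2 : ∫ r in R..M, r ^ (n - 1) * g' r ^ 2 ≤ ∫ r in R..M, r ^ (n - 1) * h r ^ 2 := by
    apply intervalIntegral.integral_mono_on hRM.le (hF1cont.intervalIntegrable R M)
      (((continuous_pow _).mul (hhcont.pow 2)).intervalIntegrable R M)
    intro r hr
    have hrpos : 0 < r := lt_of_lt_of_le hR hr.1
    have hsq : g' r ^ 2 ≤ h r ^ 2 := by
      rw [← sq_abs (g' r)]
      exact pow_le_pow_left₀ (abs_nonneg _) (hg'le r) 2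
    exact mul_le_mul_of_nonneg_left hsq (pow_nonneg hrpos.le _)
  set F : ℝ → ℝ := fun r => r ^ (n - 1) * h r ^ 2 with hF
  have hFcont : Continuous F := (continuous_pow _).mul (hhcont.pow 2)
  have hFsupp : HasCompactSupport F := by
    apply HasCompactSupport.intro (isCompact_Icc (a := -(|K| + 1)) (b := |K| + 1))
    intro x hx
    simp only [mem_Icc, not_and_or, not_le] at hx
    have hKx : K < |x| := by
      rcases hx with hx | hx
      · rw [abs_of_neg (by linarith [abs_nonneg K] : x < 0)]
        calc K ≤ |K| := le_abs_self K
          _ < -x := by linarith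
      · calc K ≤ |K| := le_abs_self K
          _ < x := by linarith
          _ ≤ |x| := le_abs_self x
        -- x > |K|+1 > 0, |x| = x
    have hKx' : K < |x| := hKx
    simp only [hF]
    rw [hhzero x hKx']
    ring
  have hFint : IntegrableOn F (Ioi (0:ℝ)) volume :=
    (hFcont.integrable_of_hasCompactSupport hFsupp).integrableOn
  have hstep3 : ∫ r in R..M, F r ≤ ∫ r in Ioi (0:ℝ), F r := by
    rw [intervalIntegral.integral_of_le hRM.le]
    apply setIntegral_mono_set hFint
    · filter_upwards [ae_restrict_mem measurableSet_Ioi] with r hr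
      have hr0 : (0:ℝ) < r := hr
      simp only [hF, Pi.zero_apply]
      positivity
    · exact HasSubset.Subset.eventuallyLE (fun x hx => lt_of_lt_of_le hR (le_of_lt hx.1))
  have hIa : a ≤ ∫ r in Ioi (0:ℝ), F r := le_trans hstep1 (le_trans hmono2 hstep3)
  -- spherical coordinates
  have hsph := MeasureTheory.integral_fun_norm_addHaar
    (volume : Measure (EuclideanSpace ℝ (Fin n))) (fun r => h r ^ 2)
  simp only [finrank_euclideanSpace_fin] at hsph
  have hLHS : ∫ x, ‖gradient f x‖ ^ 2
      = ∫ x : EuclideanSpace ℝ (Fin n), (fun r => h r ^ 2) ‖x‖ := by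
    congr 1
    funext x
    simp only [key x]
  rw [hLHS, hsph, nsmul_eq_mul, smul_eq_mul]
  have hFeq : ∫ r in Ioi (0:ℝ), r ^ (n - 1) • (fun r => h r ^ 2) r = ∫ r in Ioi (0:ℝ), F r := by
    simp only [smul_eq_mul, hF]
  rw [hFeq]
  have hvol0 : 0 ≤ (volume (ball (0 : EuclideanSpace ℝ (Fin n)) 1)).toReal :=
    ENNReal.toReal_nonneg
  have hRzz : R ^ ((n:ℤ) - 2) = R ^ (n - 2) := by
    rw [← zpow_natCast R (n - 2)]
    congr 1
    push_cast [Nat.cast_sub (by omega : 2 ≤ n)]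
    ring
  calc ((n:ℝ) - 2) * ((n:ℝ) * (volume (ball (0 : EuclideanSpace ℝ (Fin n)) 1)).toReal)
        * R ^ (n - 2)
      = (n:ℝ) * ((volume (ball (0 : EuclideanSpace ℝ (Fin n)) 1)).toReal * a) := by
        rw [ha, ← hRzz]; ring
    _ ≤ (n:ℝ) * ((volume (ball (0 : EuclideanSpace ℝ (Fin n)) 1)).toReal * ∫ r in Ioi (0:ℝ), F r) :=
        mul_le_mul_of_nonneg_left (mul_le_mul_of_nonneg_left hIa hvol0) (Nat.cast_nonneg n)
end

section
/- Let a > 0, κ₁ = π/(2a), and χ(u) = cos(κ₁ u). For each integer k ≥ 0 define μ_k = ∫_{−a}^{a} u^k (χ'(u)² − κ₁² χ(u)²) du. Then μ_k = 0 if k is odd or k = 0, and for every even integer k ≥ 2, μ_k = (1/2) · k!/(2κ₁)^{k−1} · Σ_{l=1}^{k/2} (−1)^{k/2 − l} π^{2l−1}/(2l−1)!. Moreover μ_k > 0 for every even k ≥ 2. -/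
/-!
Since `χ'² - κ₁²χ² = -κ₁² cos (2κ₁u)`, the substitution `t = 2κ₁u` (with `2κ₁a = π`) gives
`μ_k = -κ₁² (2κ₁)^(-k-1) C_k` for the moments `C_k = ∫_{-π}^{π} tᵏ cos t`. Odd `C_k` vanish
by symmetry. Integrating by parts twice yields
`C_{n+2} = -(n+2)(π^{n+1} - (-π)^{n+1} + (n+1) C_n)`, which unrolls to the alternating sum.
Integrating by parts once yields `C_k = -k ∫ t^{k-1} sin t`, and for even `k` the integrand
`t^{k-1} sin t` is nonnegative on `[-π, π]`, so `C_k < 0`.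
-/

open MeasureTheory Real

theorem integral_neg_self_eq_zero_of_odd {f : ℝ → ℝ} (hf : ∀ x, f (-x) = -f x) (b : ℝ) :
    ∫ x in -b..b, f x = 0 := by
  have h := intervalIntegral.integral_comp_neg (a := -b) (b := b) f
  simp only [neg_neg, hf, intervalIntegral.integral_neg] at h
  linarith

noncomputable def cosMoment (k : ℕ) : ℝ := ∫ t in -π..π, t ^ k * cos t

noncomputable def sinMoment (k : ℕ) : ℝ := ∫ t in -π..π, t ^ k * sin t

theorem cosMoment_of_odd {k : ℕ} (hk : Odd k) : cosMoment k = 0 :=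
  integral_neg_self_eq_zero_of_odd (fun t => by rw [hk.neg_pow, cos_neg, neg_mul]) π

theorem cosMoment_zero : cosMoment 0 = 0 := by
  simp [cosMoment, integral_cos]

theorem cosMoment_succ (n : ℕ) : cosMoment (n + 1) = -(n + 1) * sinMoment n := by
  have h := intervalIntegral.integral_mul_deriv_eq_deriv_mul (a := -π) (b := π)
    (fun t _ => hasDerivAt_pow (n + 1) t) (fun t _ => hasDerivAt_sin t)
    (Continuous.intervalIntegrable (by fun_prop) _ _)
    (Continuous.intervalIntegrable (by fun_prop) _ _)
  simp only [sin_neg, sin_pi, neg_zero, mul_zero, sub_zero, zero_sub, Nat.add_sub_cancel,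
    Nat.cast_add_one, mul_assoc, intervalIntegral.integral_const_mul] at h
  rw [cosMoment, sinMoment, h]
  ring

theorem sinMoment_succ (n : ℕ) :
    sinMoment (n + 1) = π ^ (n + 1) - (-π) ^ (n + 1) + (n + 1) * cosMoment n := by
  have h := intervalIntegral.integral_mul_deriv_eq_deriv_mul (a := -π) (b := π)
    (fun t _ => hasDerivAt_pow (n + 1) t) (fun t _ => (hasDerivAt_cos t).neg)
    (Continuous.intervalIntegrable (by fun_prop) _ _)
    (Continuous.intervalIntegrable (by fun_prop) _ _)
  simp only [Pi.neg_apply, neg_neg, cos_neg, cos_pi, mul_one, mul_neg, Nat.add_sub_cancel,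
    Nat.cast_add_one, mul_assoc, intervalIntegral.integral_const_mul,
    intervalIntegral.integral_neg] at h
  rw [sinMoment, cosMoment, h]
  ring

theorem cosMoment_add_two (n : ℕ) :
    cosMoment (n + 2) = -(n + 2) * (π ^ (n + 1) - (-π) ^ (n + 1) + (n + 1) * cosMoment n) := by
  rw [cosMoment_succ, sinMoment_succ]
  push_cast
  ring

theorem sinMoment_pos_of_odd {n : ℕ} (hn : Odd n) : 0 < sinMoment n := by
  obtain ⟨m, rfl⟩ := hn
  have hint : ∀ a b : ℝ, IntervalIntegrable (fun t : ℝ => t ^ (2 * m + 1) * sin t) volume a b :=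
    fun _ _ => Continuous.intervalIntegrable (by fun_prop) _ _
  have hleft : 0 ≤ ∫ t in -π..0, t ^ (2 * m + 1) * sin t := by
    refine intervalIntegral.integral_nonneg (by linarith [pi_pos]) fun t ht => ?_
    have : t ^ (2 * m + 1) * sin t = t ^ (2 * m) * (-t * -sin t) := by ring
    rw [this]
    exact mul_nonneg (Even.pow_nonneg ⟨m, by ring⟩ t) (mul_nonneg (by linarith [ht.2])
      (neg_nonneg.2 (sin_nonpos_of_nonpos_of_neg_pi_le ht.2 ht.1)))
  have hright : 0 < ∫ t in (0 : ℝ)..π, t ^ (2 * m + 1) * sin t :=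
    intervalIntegral.intervalIntegral_pos_of_pos_on (hint _ _)
      (fun t ht => mul_pos (pow_pos ht.1 _) (sin_pos_of_pos_of_lt_pi ht.1 ht.2)) pi_pos
  rw [sinMoment, ← intervalIntegral.integral_add_adjacent_intervals (hint _ 0) (hint 0 _)]
  linarith

theorem cosMoment_neg_of_even {k : ℕ} (hk : Even k) (hk0 : k ≠ 0) : cosMoment k < 0 := by
  obtain ⟨n, rfl⟩ := Nat.exists_eq_add_one.2 (Nat.pos_of_ne_zero hk0)
  have hn : Odd n := by simpa [Nat.even_add_one] using hk
  rw [cosMoment_succ]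
  exact mul_neg_of_neg_of_pos (neg_neg_of_pos (by positivity)) (sinMoment_pos_of_odd hn)

noncomputable def altSinSum (m : ℕ) : ℝ :=
  ∑ l ∈ Finset.Icc 1 m, (-1 : ℝ) ^ (m - l) * π ^ (2 * l - 1) / (Nat.factorial (2 * l - 1))

theorem altSinSum_succ (m : ℕ) :
    altSinSum (m + 1) = π ^ (2 * m + 1) / (Nat.factorial (2 * m + 1)) - altSinSum m := by
  have hterm : ∀ l ∈ Finset.Icc 1 m,
      (-1 : ℝ) ^ (m + 1 - l) * π ^ (2 * l - 1) / (Nat.factorial (2 * l - 1)) =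
        -((-1 : ℝ) ^ (m - l) * π ^ (2 * l - 1) / (Nat.factorial (2 * l - 1))) :=
    fun l hl => by
      rw [show m + 1 - l = m - l + 1 by have := (Finset.mem_Icc.1 hl).2; omega, pow_succ]
      ring
  rw [altSinSum, Finset.sum_Icc_succ_top (by omega), Finset.sum_congr rfl hterm,
    Finset.sum_neg_distrib, altSinSum, Nat.sub_self, show 2 * (m + 1) - 1 = 2 * m + 1 by omega]
  ring

theorem cosMoment_two_mul (m : ℕ) :
    cosMoment (2 * m) = -2 * (Nat.factorial (2 * m)) * altSinSum m := by
  induction m with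
  | zero => simp [cosMoment_zero, altSinSum]
  | succ m ih =>
    rw [show 2 * (m + 1) = 2 * m + 2 by ring, cosMoment_add_two, ih, altSinSum_succ,
      Odd.neg_pow ⟨m, rfl⟩, Nat.factorial_succ, Nat.factorial_succ]
    push_cast
    field_simp
    ring

theorem integral_pow_mul_cos_const_mul (k : ℕ) {c : ℝ} (hc : c ≠ 0) (a b : ℝ) :
    ∫ u in a..b, u ^ k * cos (c * u) = (c ^ (k + 1))⁻¹ * ∫ t in c * a..c * b, t ^ k * cos t := by
  have h : ∀ u, u ^ k * cos (c * u) = (c ^ k)⁻¹ * ((c * u) ^ k * cos (c * u)) := fun u => by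
    field_simp
    ring
  simp only [h, intervalIntegral.integral_const_mul,
    intervalIntegral.integral_comp_mul_left (fun t => t ^ k * cos t) hc, smul_eq_mul]
  ring

theorem sq_deriv_cos_const_mul_sub (κ u : ℝ) :
    deriv (fun u => cos (κ * u)) u ^ 2 - κ ^ 2 * cos (κ * u) ^ 2 = -κ ^ 2 * cos (2 * κ * u) := by
  rw [((hasDerivAt_id' u).const_mul κ).cos.deriv, mul_assoc, cos_two_mul']
  ring

theorem integral_pow_mul_deficiency {κ a : ℝ} (hκa : 2 * κ * a = π) (k : ℕ) :
    ∫ u in -a..a, u ^ k * (deriv (fun u => cos (κ * u)) u ^ 2 - κ ^ 2 * cos (κ * u) ^ 2) =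
      -κ ^ 2 / (2 * κ) ^ (k + 1) * cosMoment k := by
  have h2κ : 2 * κ ≠ 0 := left_ne_zero_of_mul (hκa ▸ pi_ne_zero)
  have hpt : ∀ u, u ^ k * (deriv (fun u => cos (κ * u)) u ^ 2 - κ ^ 2 * cos (κ * u) ^ 2) =
      -κ ^ 2 * (u ^ k * cos (2 * κ * u)) := fun u => by
    rw [sq_deriv_cos_const_mul_sub]
    ring
  simp only [hpt, intervalIntegral.integral_const_mul, integral_pow_mul_cos_const_mul k h2κ,
    mul_neg, hκa, cosMoment]
  ring

/-- Moments of the deficiency density of the first transverse Dirichlet mode: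
with `κ₁ = π/(2a)`, `χ(u) = cos(κ₁ u)`, and
`μ_k = ∫_{-a}^a u^k (χ'(u)² - κ₁² χ(u)²) du`, we have `μ_k = 0` for `k` odd or
`k = 0`, the explicit formula for even `k ≥ 2`, and `μ_k > 0` for even `k ≥ 2`. -/
theorem stmt_7 (a : ℝ) (ha : 0 < a) (κ₁ : ℝ) (hκ : κ₁ = π / (2 * a))
    (χ : ℝ → ℝ) (hχ : χ = fun u => Real.cos (κ₁ * u))
    (μ : ℕ → ℝ)
    (hμ : ∀ k, μ k = ∫ u in (-a)..a, u ^ k * ((deriv χ u) ^ 2 - κ₁ ^ 2 * (χ u) ^ 2)) :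
    (∀ k, Odd k → μ k = 0) ∧ μ 0 = 0 ∧
      (∀ k : ℕ, Even k → 2 ≤ k →
        μ k = (1 / 2) * (Nat.factorial k : ℝ) / (2 * κ₁) ^ (k - 1) *
          ∑ l ∈ Finset.Icc 1 (k / 2),
            (-1 : ℝ) ^ (k / 2 - l) * π ^ (2 * l - 1) / (Nat.factorial (2 * l - 1))) ∧
      (∀ k : ℕ, Even k → 2 ≤ k → 0 < μ k) := by
  have hκa : 2 * κ₁ * a = π := by rw [hκ]; field_simp
  have hκ0 : 0 < κ₁ := by rw [hκ]; positivity
  have hμ' : ∀ k, μ k = -κ₁ ^ 2 / (2 * κ₁) ^ (k + 1) * cosMoment k := fun k => by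
    rw [hμ, hχ, integral_pow_mul_deficiency hκa]
  refine ⟨fun k hk => by rw [hμ', cosMoment_of_odd hk, mul_zero],
    by rw [hμ', cosMoment_zero, mul_zero], fun k hk hk2 => ?_, fun k hk hk2 => ?_⟩
  · obtain ⟨n, rfl⟩ : ∃ n, k = 2 * n + 2 := ⟨k / 2 - 1, by obtain ⟨r, rfl⟩ := hk; omega⟩
    rw [hμ', show 2 * n + 2 = 2 * (n + 1) by ring, cosMoment_two_mul,
      Nat.mul_div_cancel_left _ two_pos, show 2 * (n + 1) - 1 = 2 * n + 1 by omega, altSinSum]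
    field_simp
    ring
  · rw [hμ']
    refine mul_pos_of_neg_of_neg ?_ (cosMoment_neg_of_even hk (by omega))
    exact div_neg_of_neg_of_pos (neg_neg_of_pos (by positivity)) (by positivity)
end

section
/- Let 0 < δ ≤ 1/2 and let p, q, r, s, t be real numbers (playing the roles of f_x, f_y, f_xx, f_yy, f_xy) satisfying r ≥ 0, s ≥ 0, rs − t² ≥ 0, and p² + q² ≥ δ². Then ((1 + q²)r + (1 + p²)s − 2pqt)/(1 + p² + q²)^{3/2} ≥ (δ³/2) · (r q² − 2 t p q + s p²)/(p² + q²)^{3/2}. -/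
/-- Comparison of the mean curvature of a convex graph with the curvature of its
level curves: if `0 < δ ≤ 1/2`, the Hessian data `(r, s, t)` is positive
semidefinite, and `p² + q² ≥ δ²`, then
`H = ((1+q²)r + (1+p²)s - 2pqt)/(1+p²+q²)^{3/2} ≥ (δ³/2) (rq² - 2tpq + sp²)/(p²+q²)^{3/2}`. -/
theorem stmt_13 (δ p q r s t : ℝ) (hδ0 : 0 < δ) (hδ : δ ≤ 1 / 2)
    (hr : 0 ≤ r) (hs : 0 ≤ s) (hdet : 0 ≤ r * s - t ^ 2)
    (hgrad : δ ^ 2 ≤ p ^ 2 + q ^ 2) :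
    (δ ^ 3 / 2) * ((r * q ^ 2 - 2 * t * p * q + s * p ^ 2) /
        (p ^ 2 + q ^ 2) ^ ((3 : ℝ) / 2)) ≤
      ((1 + q ^ 2) * r + (1 + p ^ 2) * s - 2 * p * q * t) /
        (1 + p ^ 2 + q ^ 2) ^ ((3 : ℝ) / 2) := by
  have hu : 0 < p ^ 2 + q ^ 2 := lt_of_lt_of_le (by positivity) hgrad
  have hu1 : (0:ℝ) < 1 + p ^ 2 + q ^ 2 := by nlinarith
  -- nonnegativity of the level-curve numerator
  have hN : 0 ≤ r * q ^ 2 - 2 * t * p * q + s * p ^ 2 := by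
    rcases eq_or_lt_of_le hr with h | h
    · have ht : t = 0 := by nlinarith [sq_nonneg t]
      rw [← h, ht]
      nlinarith [mul_nonneg hs (sq_nonneg p)]
    · nlinarith [sq_nonneg (r * q - t * p), mul_nonneg hdet (sq_nonneg p)]
  have hM : r * q ^ 2 - 2 * t * p * q + s * p ^ 2 ≤
      (1 + q ^ 2) * r + (1 + p ^ 2) * s - 2 * p * q * t := by nlinarith
  -- rpow 3/2 as sqrt of cube
  have h32 : ∀ x : ℝ, 0 ≤ x → x ^ ((3:ℝ)/2) = Real.sqrt (x ^ 3) := by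
    intro x hx
    rw [Real.sqrt_eq_rpow, ← Real.rpow_natCast x 3, ← Real.rpow_mul hx]
    norm_num
  rw [h32 _ hu.le, h32 _ hu1.le]
  have hS1 : 0 < Real.sqrt ((p ^ 2 + q ^ 2) ^ 3) := Real.sqrt_pos.2 (by positivity)
  have hS2 : 0 < Real.sqrt ((1 + p ^ 2 + q ^ 2) ^ 3) := Real.sqrt_pos.2 (by positivity)
  -- key power inequality
  have hδ2 : δ ^ 2 ≤ 1 / 4 := by nlinarith
  have h5 : δ ^ 2 * (1 + (p ^ 2 + q ^ 2)) ≤ 5 / 4 * (p ^ 2 + q ^ 2) := by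
    nlinarith [mul_le_mul_of_nonneg_right hδ2 hu.le]
  have h6 := pow_le_pow_left₀ (by positivity : (0:ℝ) ≤ δ ^ 2 * (1 + (p ^ 2 + q ^ 2))) h5 3
  have key : δ ^ 3 / 2 * Real.sqrt ((1 + p ^ 2 + q ^ 2) ^ 3) ≤
      Real.sqrt ((p ^ 2 + q ^ 2) ^ 3) := by
    have heq : δ ^ 3 / 2 * Real.sqrt ((1 + p ^ 2 + q ^ 2) ^ 3) =
        Real.sqrt ((δ ^ 3 / 2) ^ 2 * (1 + p ^ 2 + q ^ 2) ^ 3) := by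
      rw [Real.sqrt_mul (by positivity), Real.sqrt_sq (by positivity)]
    rw [heq]
    apply Real.sqrt_le_sqrt
    nlinarith [h6, pow_pos hu 3]
  rw [mul_div_assoc' , div_le_div_iff₀ hS1 hS2]
  calc δ ^ 3 / 2 * (r * q ^ 2 - 2 * t * p * q + s * p ^ 2) *
        Real.sqrt ((1 + p ^ 2 + q ^ 2) ^ 3)
      = (r * q ^ 2 - 2 * t * p * q + s * p ^ 2) *
        (δ ^ 3 / 2 * Real.sqrt ((1 + p ^ 2 + q ^ 2) ^ 3)) := by ring
    _ ≤ (r * q ^ 2 - 2 * t * p * q + s * p ^ 2) *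
        Real.sqrt ((p ^ 2 + q ^ 2) ^ 3) := by
        exact mul_le_mul_of_nonneg_left key hN
    _ ≤ ((1 + q ^ 2) * r + (1 + p ^ 2) * s - 2 * p * q * t) *
        Real.sqrt ((p ^ 2 + q ^ 2) ^ 3) :=
        mul_le_mul_of_nonneg_right hM hS1.le
end
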